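/- If φ ∈ 𝒮(ℝ^n) with ‖φ‖_{L²} = 1, then the transform U_φψ(z) = (2πℏ)^{−n/2} ∫ exp((i/ℏ)p·(x−x')) φ(x−x') ψ(x') dx' is an isometry from L²(ℝ^n) into L²(ℝ^{2n}): ⟨U_φψ, U_φψ'⟩_{L²(ℝ^{2n})} = ⟨ψ,ψ'⟩_{L²(ℝ^n)} for all ψ, ψ' ∈ 𝒮(ℝ^n). -/

import Mathlib

open Complex Real MeasureTheory

/-- The transform `U_φ`. -/
noncomputable def Uphi (n : ℕ) (hbar : ℝ) (φ ψ : (Fin n → ℝ) → ℂ)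
    (x p : Fin n → ℝ) : ℂ :=
  (((1 / (2 * π * hbar)) ^ ((n : ℝ) / 2) : ℝ) : ℂ) *
    ∫ x' : Fin n → ℝ,
      Complex.exp ((I / (hbar : ℂ)) * ((∑ i, p i * (x i - x' i) : ℝ) : ℂ))
        * φ (x - x') * ψ x'

/-!
For fixed `x`, `U_φψ(x, ·)` is, up to the unimodular factor `exp (i p·x / ℏ)` and the dilation
`p ↦ p / (2πℏ)`, the Fourier transform of the windowed function `x' ↦ φ(x - x') ψ(x')`.
Plancherel in `p` therefore gives
`∫ conj (U_φψ) U_φψ' dp = ∫ |φ(x - x')|² conj (ψ x') ψ'(x') dx'`,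
and integrating in `x` (Fubini, then `‖φ‖₂ = 1`) leaves `⟨ψ, ψ'⟩`. The case `ψ = ψ'` of the same
computation shows `U_φψ ∈ L²(ℝ²ⁿ)`, which makes the first Fubini step legitimate.
-/

open FourierTransform SchwartzMap

section FourierPi

variable {n : ℕ}

-- `Fin n → ℝ` carries the sup norm, so Mathlib's Fourier transform is transported from
-- `EuclideanSpace ℝ (Fin n)`.
noncomputable def fourierPi (f : 𝓢(Fin n → ℝ, ℂ)) : 𝓢(Fin n → ℝ, ℂ) :=
  compCLMOfContinuousLinearEquiv ℂ (EuclideanSpace.equiv (Fin n) ℝ).symm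
    (𝓕 (compCLMOfContinuousLinearEquiv ℂ (EuclideanSpace.equiv (Fin n) ℝ) f))

lemma integral_comp_toLp {G : Type*} [NormedAddCommGroup G] [NormedSpace ℝ G]
    (g : EuclideanSpace ℝ (Fin n) → G) :
    ∫ x : Fin n → ℝ, g (WithLp.toLp 2 x) = ∫ y, g y :=
  (PiLp.volume_preserving_toLp (Fin n)).integral_comp
    (MeasurableEquiv.toLp 2 _).measurableEmbedding g

lemma fourierPi_apply (f : 𝓢(Fin n → ℝ, ℂ)) (ξ : Fin n → ℝ) :
    fourierPi f ξ = ∫ x : Fin n → ℝ, 𝐞 (-∑ i, x i * ξ i) • f x := by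
  simp only [fourierPi, compCLMOfContinuousLinearEquiv_apply, Function.comp_apply, fourier_coe,
    Real.fourier_eq]
  rw [← integral_comp_toLp]
  simp [PiLp.inner_apply, mul_comm, PiLp.coe_continuousLinearEquiv]

lemma integral_conj_fourierPi_mul (f g : 𝓢(Fin n → ℝ, ℂ)) :
    ∫ ξ, starRingEnd ℂ (fourierPi f ξ) * fourierPi g ξ = ∫ x, starRingEnd ℂ (f x) * g x := by
  have h := integral_inner_fourier_fourier
    (compCLMOfContinuousLinearEquiv ℂ (EuclideanSpace.equiv (Fin n) ℝ) f)
    (compCLMOfContinuousLinearEquiv ℂ (EuclideanSpace.equiv (Fin n) ℝ) g)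
  simp only [RCLike.inner_apply'] at h
  rw [← integral_comp_toLp, ← integral_comp_toLp] at h
  simpa [fourierPi, PiLp.coe_continuousLinearEquiv] using h

end FourierPi

section Windowed

variable {E : Type*} [NormedAddCommGroup E] [NormedSpace ℝ E]

noncomputable def windowed (φ θ : 𝓢(E, ℂ)) (x : E) : 𝓢(E, ℂ) :=
  smulLeftCLM ℂ ⇑θ (compSubConstCLM ℂ x
    (compCLMOfContinuousLinearEquiv ℂ (LinearIsometryEquiv.neg ℝ (E := E)).toContinuousLinearEquiv
      φ))

@[simp]
lemma windowed_apply (φ θ : 𝓢(E, ℂ)) (x y : E) : windowed φ θ x y = φ (x - y) * θ y := by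
  simp [windowed, θ.hasTemperateGrowth, mul_comm]

end Windowed

theorem SchwartzMap.integrable_conj_mul {D : Type*} [NormedAddCommGroup D] [NormedSpace ℝ D]
    [MeasurableSpace D] [BorelSpace D] [SecondCountableTopology D] {μ : Measure D}
    [μ.HasTemperateGrowth] (f g : 𝓢(D, ℂ)) :
    Integrable (fun x => starRingEnd ℂ (f x) * g x) μ :=
  (f.memLp 2 μ).star.integrable_mul (g.memLp 2 μ)

lemma conj_mul_mul_of_norm_eq_one {e : ℂ} (he : ‖e‖ = 1) (c : ℝ) (a b : ℂ) :
    starRingEnd ℂ (c * (e * a)) * (c * (e * b)) = (c ^ 2 : ℝ) * (starRingEnd ℂ a * b) := by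
  have hee : starRingEnd ℂ e * e = 1 := by rw [Complex.conj_mul', he]; simp
  simp only [map_mul, Complex.conj_ofReal]
  push_cast
  linear_combination (c : ℂ) ^ 2 * (starRingEnd ℂ a * b) * hee

lemma norm_exp_I_div_mul_ofReal (hbar t : ℝ) :
    ‖Complex.exp ((I / (hbar : ℂ)) * (t : ℂ))‖ = 1 := by
  rw [Complex.norm_exp]
  simp

section Uphi

variable {n : ℕ} {hbar : ℝ}

lemma Uphi_eq_fourierPi (φ θ : 𝓢(Fin n → ℝ, ℂ)) (x p : Fin n → ℝ) :
    Uphi n hbar φ θ x p = (((1 / (2 * π * hbar)) ^ ((n : ℝ) / 2) : ℝ) : ℂ) *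
      (Complex.exp ((I / (hbar : ℂ)) * ((∑ i, p i * x i : ℝ) : ℂ)) *
        fourierPi (windowed φ θ x) ((2 * π * hbar)⁻¹ • p)) := by
  rw [Uphi, fourierPi_apply]
  congr 1
  rw [← integral_const_mul]
  refine integral_congr_ae (ae_of_all _ fun x' : Fin n → ℝ => ?_)
  simp only [Circle.smul_def, Real.fourierChar_apply, windowed_apply, smul_eq_mul]
  rw [← mul_assoc, ← Complex.exp_add, mul_assoc]
  congr 2
  have hsum : ∑ i, x' i * ((2 * π * hbar)⁻¹ • p) i = (2 * π * hbar)⁻¹ * ∑ i, p i * x' i := by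
    simp only [Pi.smul_apply, smul_eq_mul, Finset.mul_sum]
    exact Finset.sum_congr rfl fun i _ => by ring
  simp only [hsum, mul_sub, Finset.sum_sub_distrib]
  push_cast
  field_simp
  ring

lemma conj_Uphi_mul_Uphi (hhbar : 0 < hbar) (φ ψ ψ' : 𝓢(Fin n → ℝ, ℂ)) (x p : Fin n → ℝ) :
    starRingEnd ℂ (Uphi n hbar φ ψ x p) * Uphi n hbar φ ψ' x p =
      (((2 * π * hbar) ^ n)⁻¹ : ℝ) *
        (starRingEnd ℂ (fourierPi (windowed φ ψ x) ((2 * π * hbar)⁻¹ • p)) *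
          fourierPi (windowed φ ψ' x) ((2 * π * hbar)⁻¹ • p)) := by
  have hC : ((1 / (2 * π * hbar)) ^ ((n : ℝ) / 2)) ^ 2 = ((2 * π * hbar) ^ n)⁻¹ := by
    rw [← Real.rpow_mul_natCast (by positivity), Nat.cast_ofNat, div_mul_cancel₀ _ two_ne_zero,
      Real.rpow_natCast, one_div, inv_pow]
  rw [Uphi_eq_fourierPi, Uphi_eq_fourierPi,
    conj_mul_mul_of_norm_eq_one (norm_exp_I_div_mul_ofReal _ _), hC]

lemma integrable_conj_Uphi_mul_Uphi_slice (hhbar : 0 < hbar) (φ ψ ψ' : 𝓢(Fin n → ℝ, ℂ))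
    (x : Fin n → ℝ) :
    Integrable (fun p => starRingEnd ℂ (Uphi n hbar φ ψ x p) * Uphi n hbar φ ψ' x p) := by
  simp_rw [conj_Uphi_mul_Uphi hhbar]
  exact ((integrable_conj_mul _ _).comp_smul (inv_ne_zero (by positivity))).const_mul _

lemma integral_conj_Uphi_mul_Uphi_slice (hhbar : 0 < hbar) (φ ψ ψ' : 𝓢(Fin n → ℝ, ℂ))
    (x : Fin n → ℝ) :
    ∫ p, starRingEnd ℂ (Uphi n hbar φ ψ x p) * Uphi n hbar φ ψ' x p =
      ∫ x', starRingEnd ℂ (ψ x') * ψ' x' * ((‖φ (x - x')‖ ^ 2 : ℝ) : ℂ) := by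
  simp_rw [conj_Uphi_mul_Uphi hhbar]
  rw [integral_const_mul, Measure.integral_comp_smul volume (fun ξ =>
    starRingEnd ℂ (fourierPi (windowed φ ψ x) ξ) * fourierPi (windowed φ ψ' x) ξ),
    integral_conj_fourierPi_mul, Module.finrank_fin_fun, inv_pow, inv_inv,
    abs_of_pos (by positivity), Complex.real_smul, ← mul_assoc, ← Complex.ofReal_mul,
    inv_mul_cancel₀ (by positivity), Complex.ofReal_one, one_mul]
  refine integral_congr_ae (ae_of_all _ fun x' => ?_)
  simp only [windowed_apply, map_mul, Complex.ofReal_pow, ← Complex.conj_mul' (φ (x - x'))]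
  ring

lemma integrable_norm_sq_Uphi_slice (hhbar : 0 < hbar) (φ ψ : 𝓢(Fin n → ℝ, ℂ))
    (x : Fin n → ℝ) : Integrable (fun p => ‖Uphi n hbar φ ψ x p‖ ^ 2) := by
  simpa [Complex.conj_mul', ← Complex.ofReal_pow, Complex.ofReal_re] using
    (integrable_conj_Uphi_mul_Uphi_slice hhbar φ ψ ψ x).re

lemma integral_norm_sq_Uphi_slice (hhbar : 0 < hbar) (φ ψ : 𝓢(Fin n → ℝ, ℂ))
    (x : Fin n → ℝ) :
    ∫ p, ‖Uphi n hbar φ ψ x p‖ ^ 2 = ∫ x', ‖ψ x'‖ ^ 2 * ‖φ (x - x')‖ ^ 2 := by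
  have h := integral_conj_Uphi_mul_Uphi_slice hhbar φ ψ ψ x
  simp only [Complex.conj_mul', ← Complex.ofReal_pow, ← Complex.ofReal_mul] at h
  exact_mod_cast h

lemma aestronglyMeasurable_Uphi (φ θ : 𝓢(Fin n → ℝ, ℂ)) :
    AEStronglyMeasurable (fun z : (Fin n → ℝ) × (Fin n → ℝ) => Uphi n hbar φ θ z.1 z.2) := by
  have hK : Continuous fun w : ((Fin n → ℝ) × (Fin n → ℝ)) × (Fin n → ℝ) =>
      Complex.exp ((I / (hbar : ℂ)) * ((∑ i, w.1.2 i * (w.1.1 i - w.2 i) : ℝ) : ℂ)) *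
        φ (w.1.1 - w.2) * θ w.2 := by
    fun_prop
  exact aestronglyMeasurable_const.mul
    (hK.stronglyMeasurable.integral_prod_right' (ν := volume)).aestronglyMeasurable

lemma memLp_two_Uphi (hhbar : 0 < hbar) (φ ψ : 𝓢(Fin n → ℝ, ℂ)) :
    MemLp (fun z : (Fin n → ℝ) × (Fin n → ℝ) => Uphi n hbar φ ψ z.1 z.2) 2 := by
  have hmeas := aestronglyMeasurable_Uphi (hbar := hbar) φ ψ
  rw [memLp_two_iff_integrable_sq_norm hmeas]
  refine (integrable_prod_iff (hmeas.norm.pow 2)).2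
    ⟨ae_of_all _ (integrable_norm_sq_Uphi_slice hhbar φ ψ), ?_⟩
  simp only [Pi.pow_apply, norm_pow, norm_norm, integral_norm_sq_Uphi_slice hhbar]
  have hkernel := ((ψ.memLp 2).integrable_norm_pow two_ne_zero).convolution_integrand
    (ContinuousLinearMap.mul ℝ ℝ) ((φ.memLp 2).integrable_norm_pow two_ne_zero)
  exact hkernel.integral_prod_left

lemma integrable_conj_Uphi_mul_Uphi (hhbar : 0 < hbar) (φ ψ ψ' : 𝓢(Fin n → ℝ, ℂ)) :
    Integrable fun z : (Fin n → ℝ) × (Fin n → ℝ) =>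
      starRingEnd ℂ (Uphi n hbar φ ψ z.1 z.2) * Uphi n hbar φ ψ' z.1 z.2 :=
  (memLp_two_Uphi hhbar φ ψ).star.integrable_mul (memLp_two_Uphi hhbar φ ψ')

end Uphi

/-- If `‖φ‖_{L²} = 1` then `U_φ` is an isometry `L²(ℝⁿ) → L²(ℝ²ⁿ)`:
`⟨U_φψ, U_φψ'⟩ = ⟨ψ, ψ'⟩`. -/
theorem Uphi_isometry (n : ℕ) (hbar : ℝ) (hhbar : 0 < hbar)
    (φ : SchwartzMap (Fin n → ℝ) ℂ)
    (hφ : ∫ x : Fin n → ℝ, ‖φ x‖ ^ 2 = 1)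
    (ψ ψ' : SchwartzMap (Fin n → ℝ) ℂ) :
    (∫ z : (Fin n → ℝ) × (Fin n → ℝ),
        (starRingEnd ℂ) (Uphi n hbar (⇑φ) (⇑ψ) z.1 z.2) * Uphi n hbar (⇑φ) (⇑ψ') z.1 z.2)
      = ∫ x : Fin n → ℝ, (starRingEnd ℂ) (ψ x) * ψ' x := by
  have hkernel := (integrable_conj_mul (μ := volume) ψ ψ').convolution_integrand
    (ContinuousLinearMap.mul ℂ ℂ) ((φ.memLp 2).integrable_norm_pow two_ne_zero).ofReal
  have hwindow (x' : Fin n → ℝ) : ∫ x, ((‖φ (x - x')‖ ^ 2 : ℝ) : ℂ) = 1 := by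
    rw [integral_sub_right_eq_self (fun y => ((‖φ y‖ ^ 2 : ℝ) : ℂ)), integral_complex_ofReal, hφ,
      Complex.ofReal_one]
  calc _ = ∫ x, ∫ p, starRingEnd ℂ (Uphi n hbar φ ψ x p) * Uphi n hbar φ ψ' x p :=
        integral_prod _ (integrable_conj_Uphi_mul_Uphi hhbar φ ψ ψ')
    _ = ∫ x, ∫ x', starRingEnd ℂ (ψ x') * ψ' x' * ((‖φ (x - x')‖ ^ 2 : ℝ) : ℂ) := by
        simp_rw [integral_conj_Uphi_mul_Uphi_slice hhbar]
    _ = ∫ x', ∫ x, starRingEnd ℂ (ψ x') * ψ' x' * ((‖φ (x - x')‖ ^ 2 : ℝ) : ℂ) :=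
        integral_integral_swap hkernel
    _ = _ := by simp_rw [integral_const_mul, hwindow, mul_one]
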